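/- arXiv:2002.08599 — 6 statements merged into one kernel-verified Lean document; each statement's English description precedes it below -/
import Mathlib

section
/- Let H₁ ≤ S_n, H₂ ≤ S_d, G = H₁ × H₂ acting on ℝ^{n×d} by (h₁,h₂)·X = P(h₁) X P(h₂)ᵀ. If {L¹_i}_{i=1}^{E(H₁)} and {L²_j}_{j=1}^{E(H₂)} are bases for the spaces of H₁-equivariant and H₂-equivariant linear endomorphisms respectively, then the maps T_{i,j}(X) = L¹_i X (L²_j)ᵀ form a basis for the space of linear G-equivariant maps ℝ^{n×d} → ℝ^{n×d}. -/
/-- The submodule of linear endomorphisms of `α → ℝ` that are equivariant with respect to the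
permutation action of a subgroup `G` of the symmetric group, acting by `(g • x) i = x (g⁻¹ i)`. -/
noncomputable def equivSubmodule {α : Type*} [Fintype α] [DecidableEq α]
    (G : Subgroup (Equiv.Perm α)) :
    Submodule ℝ ((α → ℝ) →ₗ[ℝ] (α → ℝ)) where
  carrier := {L | ∀ g ∈ G, ∀ x : α → ℝ, (L fun i => x (g⁻¹ i)) = fun i => L x (g⁻¹ i)}
  add_mem' := by
    intro L M hL hM g hg x
    simp only [LinearMap.add_apply, hL g hg x, hM g hg x]
    rfl
  zero_mem' := by intro g hg x; simp; rfl
  smul_mem' := by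
    intro c L hL g hg x
    simp only [LinearMap.smul_apply, hL g hg x]
    rfl

/-- The group homomorphism `Perm α × Perm β →* Perm (α × β)`, `(p, q) ↦ p × q`. -/
def permProdHom (α β : Type*) : Equiv.Perm α × Equiv.Perm β →* Equiv.Perm (α × β) where
  toFun p := Equiv.prodCongr p.1 p.2
  map_one' := by ext p <;> rfl
  map_mul' p q := by ext x <;> rfl

/-- `T_{L₁,L₂}(X) = L₁ X L₂ᵀ` : the Kronecker-product operator on `ℝ^{n×d}`, applying `L₂`
to each row of `X` and `L₁` to each column. -/
noncomputable def Tmap {n d : ℕ} (L₁ : (Fin n → ℝ) →ₗ[ℝ] (Fin n → ℝ))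
    (L₂ : (Fin d → ℝ) →ₗ[ℝ] (Fin d → ℝ)) :
    (Fin n × Fin d → ℝ) →ₗ[ℝ] (Fin n × Fin d → ℝ) where
  toFun X p := L₁ (fun k => L₂ (fun l => X (k, l)) p.2) p.1
  map_add' X Y := by
    funext p
    have h2 : (fun k => L₂ (fun l => (X + Y) (k, l)) p.2) =
        (fun k => L₂ (fun l => X (k, l)) p.2) + fun k => L₂ (fun l => Y (k, l)) p.2 := by
      funext k
      have h1 : (fun l => (X + Y) (k, l)) = (fun l => X (k, l)) + fun l => Y (k, l) := rfl
      rw [h1, map_add]; rfl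
    show L₁ _ p.1 = _
    rw [h2, map_add]; rfl
  map_smul' c X := by
    funext p
    have h2 : (fun k => L₂ (fun l => (c • X) (k, l)) p.2) =
        c • fun k => L₂ (fun l => X (k, l)) p.2 := by
      funext k
      have h1 : (fun l => (c • X) (k, l)) = c • fun l => X (k, l) := rfl
      rw [h1, map_smul]; rfl
    show L₁ _ p.1 = _
    rw [h2, map_smul]; rfl

/-!
An `H₁ × H₂`-equivariant `T` on `ℝ^{n×d}` is cut into blocks `colBlock T j l : ℝⁿ → ℝⁿ`, taking
column `j` of `X` to column `l` of `T X`. Equivariance under `H₁ × 1` puts every block in the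
commutant of `H₁`, and equivariance under `1 × H₂` gives `colBlock T (h j) (h l) = colBlock T j l`.
Expanding every block in the basis `L¹ᵢ` writes `T = ∑ᵢ Tmap L¹ᵢ Mᵢ`, where the coefficient
matrices `Mᵢ` are invariant under simultaneous permutation by `H₂`, i.e. `H₂`-equivariant, hence
combinations of the `L²ⱼ`. Linear independence is tested on rank-one matrices `X = v wᵀ`, which
`Tmap L₁ L₂` sends to `(L₁ v) (L₂ w)ᵀ`.
-/

theorem Module.Basis.eq_sum_repr_mk {R M ι : Type*} [Semiring R] [AddCommMonoid M] [Module R M]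
    [Fintype ι] {p : Submodule R M} (B : Module.Basis ι R p) {x : M} (hx : x ∈ p) :
    x = ∑ i, B.repr ⟨x, hx⟩ i • (B i : M) := by
  have := congrArg Subtype.val (B.sum_repr ⟨x, hx⟩)
  rw [Submodule.coe_sum] at this
  exact this.symm

theorem Matrix.toLin'_mem_equivSubmodule {α : Type*} [Fintype α] [DecidableEq α]
    {G : Subgroup (Equiv.Perm α)} {M : Matrix α α ℝ}
    (hM : ∀ g ∈ G, ∀ i j, M (g i) (g j) = M i j) : Matrix.toLin' M ∈ equivSubmodule G := by
  intro g hg x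
  funext i
  simp only [Matrix.toLin'_apply, Matrix.mulVec, dotProduct]
  rw [← Equiv.sum_comp g]
  refine Finset.sum_congr rfl fun j _ => ?_
  rw [← hM g hg (g⁻¹ i) j]
  simp

theorem permProdHom_inv_apply {α β : Type*} (a : Equiv.Perm α) (b : Equiv.Perm β) (p : α × β) :
    (permProdHom α β (a, b))⁻¹ p = (a⁻¹ p.1, b⁻¹ p.2) := by
  rw [← map_inv]; rfl

section ColumnBlocks

variable {α β : Type*} [DecidableEq β]

def colInsert (j : β) : (α → ℝ) →ₗ[ℝ] (α × β → ℝ) where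
  toFun v p := if p.2 = j then v p.1 else 0
  map_add' v w := by funext p; by_cases h : p.2 = j <;> simp [h]
  map_smul' c v := by funext p; by_cases h : p.2 = j <;> simp [h]

theorem colInsert_apply (j : β) (v : α → ℝ) (p : α × β) :
    colInsert j v p = if p.2 = j then v p.1 else 0 := rfl

theorem colInsert_comp_permProdHom_inv (a : Equiv.Perm α) (b : Equiv.Perm β) (j : β)
    (v : α → ℝ) :
    (fun p => colInsert j v ((permProdHom α β (a, b))⁻¹ p)) =
      colInsert (b j) fun i => v (a⁻¹ i) := by
  funext p
  simp [colInsert_apply, permProdHom_inv_apply, Equiv.symm_apply_eq]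

def colBlock (T : (α × β → ℝ) →ₗ[ℝ] (α × β → ℝ)) (j l : β) : (α → ℝ) →ₗ[ℝ] (α → ℝ) :=
  LinearMap.funLeft ℝ ℝ (fun i => (i, l)) ∘ₗ T ∘ₗ colInsert j

theorem colBlock_apply (T : (α × β → ℝ) →ₗ[ℝ] (α × β → ℝ)) (j l : β) (v : α → ℝ)
    (i : α) : colBlock T j l v i = T (colInsert j v) (i, l) := rfl

theorem apply_eq_sum_colBlock [Fintype β] (T : (α × β → ℝ) →ₗ[ℝ] (α × β → ℝ))
    (X : α × β → ℝ) (i : α) (l : β) : T X (i, l) = ∑ j, colBlock T j l (fun k => X (k, j)) i := by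
  have hX : X = ∑ j, colInsert j fun k => X (k, j) := by
    funext q
    simp [Finset.sum_apply, colInsert_apply]
  conv_lhs => rw [hX]
  simp only [map_sum, Finset.sum_apply, colBlock_apply]

variable [Fintype α] [DecidableEq α] [Fintype β] {H₁ : Subgroup (Equiv.Perm α)}
  {H₂ : Subgroup (Equiv.Perm β)} {T : (α × β → ℝ) →ₗ[ℝ] (α × β → ℝ)}

theorem colBlock_conj (hT : T ∈ equivSubmodule (Subgroup.map (permProdHom α β) (H₁.prod H₂)))
    {a : Equiv.Perm α} (ha : a ∈ H₁) {b : Equiv.Perm β} (hb : b ∈ H₂) (j l : β) (v : α → ℝ) :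
    (colBlock T (b j) (b l) fun i => v (a⁻¹ i)) = fun i => colBlock T j l v (a⁻¹ i) := by
  have hg := Subgroup.mem_map_of_mem (permProdHom α β)
    (Subgroup.mem_prod (p := (a, b)) |>.2 ⟨ha, hb⟩)
  funext i
  rw [colBlock_apply, ← colInsert_comp_permProdHom_inv, hT _ hg]
  simp [colBlock_apply, permProdHom_inv_apply]

theorem colBlock_mem_equivSubmodule
    (hT : T ∈ equivSubmodule (Subgroup.map (permProdHom α β) (H₁.prod H₂))) (j l : β) :
    colBlock T j l ∈ equivSubmodule H₁ := fun a ha v => by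
  simpa using colBlock_conj hT ha (one_mem H₂) j l v

theorem colBlock_perm_perm
    (hT : T ∈ equivSubmodule (Subgroup.map (permProdHom α β) (H₁.prod H₂)))
    {b : Equiv.Perm β} (hb : b ∈ H₂) (j l : β) : colBlock T (b j) (b l) = colBlock T j l :=
  LinearMap.ext fun v => by simpa using colBlock_conj hT (one_mem H₁) hb j l v

end ColumnBlocks

section Kronecker

variable {n d : ℕ} {H₁ : Subgroup (Equiv.Perm (Fin n))} {H₂ : Subgroup (Equiv.Perm (Fin d))}

theorem tmap_apply (L₁ : (Fin n → ℝ) →ₗ[ℝ] (Fin n → ℝ)) (L₂ : (Fin d → ℝ) →ₗ[ℝ] (Fin d → ℝ))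
    (X : Fin n × Fin d → ℝ) (p : Fin n × Fin d) :
    Tmap L₁ L₂ X p = L₁ (fun k => L₂ (fun l => X (k, l)) p.2) p.1 := rfl

noncomputable def tmapBilin :
    ((Fin n → ℝ) →ₗ[ℝ] (Fin n → ℝ)) →ₗ[ℝ] ((Fin d → ℝ) →ₗ[ℝ] (Fin d → ℝ)) →ₗ[ℝ]
      ((Fin n × Fin d → ℝ) →ₗ[ℝ] (Fin n × Fin d → ℝ)) :=
  LinearMap.mk₂ ℝ Tmap (fun _ _ _ => rfl) (fun _ _ _ => rfl)
    (fun L₁ L₂ L₂' => LinearMap.ext fun X => funext fun p => by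
      change L₁ ((fun k => _) + fun k => _) p.1 = _
      rw [map_add]; rfl)
    (fun c L₁ L₂ => LinearMap.ext fun X => funext fun p => by
      change L₁ (c • fun k => _) p.1 = _
      rw [map_smul]; rfl)

theorem tmapBilin_apply (L₁ : (Fin n → ℝ) →ₗ[ℝ] (Fin n → ℝ))
    (L₂ : (Fin d → ℝ) →ₗ[ℝ] (Fin d → ℝ)) :
    tmapBilin L₁ L₂ = Tmap L₁ L₂ := rfl

theorem tmap_apply_tmul (L₁ : (Fin n → ℝ) →ₗ[ℝ] (Fin n → ℝ)) (L₂ : (Fin d → ℝ) →ₗ[ℝ] (Fin d → ℝ))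
    (v : Fin n → ℝ) (w : Fin d → ℝ) (i : Fin n) (l : Fin d) :
    Tmap L₁ L₂ (fun q => v q.1 * w q.2) (i, l) = L₁ v i * L₂ w l := by
  have hcol : (fun k => L₂ (fun m => v k * w m) l) = L₂ w l • v := by
    funext k
    rw [show (fun m => v k * w m) = v k • w from rfl, map_smul]
    simp [mul_comm]
  rw [tmap_apply]
  dsimp only
  rw [hcol, map_smul]
  simp [mul_comm]

theorem tmap_mem_equivSubmodule {L₁ : (Fin n → ℝ) →ₗ[ℝ] (Fin n → ℝ)}
    {L₂ : (Fin d → ℝ) →ₗ[ℝ] (Fin d → ℝ)} (h₁ : L₁ ∈ equivSubmodule H₁)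
    (h₂ : L₂ ∈ equivSubmodule H₂) :
    Tmap L₁ L₂ ∈ equivSubmodule (Subgroup.map (permProdHom (Fin n) (Fin d)) (H₁.prod H₂)) := by
  rintro _ ⟨⟨a, b⟩, hab, rfl⟩ X
  funext p
  calc (Tmap L₁ L₂ fun q => X ((permProdHom (Fin n) (Fin d) (a, b))⁻¹ q)) p
      = L₁ (fun k => L₂ (fun m => X (a⁻¹ k, b⁻¹ m)) p.2) p.1 := by
        simp only [tmap_apply, permProdHom_inv_apply]
    _ = L₁ (fun k => L₂ (fun m => X (a⁻¹ k, m)) (b⁻¹ p.2)) p.1 := by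
        refine congrArg (fun x => L₁ x p.1) (funext fun k => ?_)
        exact congrFun (h₂ b hab.2 fun m => X (a⁻¹ k, m)) p.2
    _ = L₁ (fun k => L₂ (fun m => X (k, m)) (b⁻¹ p.2)) (a⁻¹ p.1) :=
        congrFun (h₁ a hab.1 fun k => L₂ (fun m => X (k, m)) (b⁻¹ p.2)) p.1
    _ = Tmap L₁ L₂ X ((permProdHom (Fin n) (Fin d) (a, b))⁻¹ p) := by
        rw [tmap_apply, permProdHom_inv_apply]

theorem eq_zero_of_sum_tmap_eq_zero {ι : Type*} [Fintype ι]
    {f : ι → (Fin n → ℝ) →ₗ[ℝ] (Fin n → ℝ)} (hf : LinearIndependent ℝ f)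
    {M : ι → (Fin d → ℝ) →ₗ[ℝ] (Fin d → ℝ)} (h : ∑ a, Tmap (f a) (M a) = 0) (a : ι) : M a = 0 := by
  refine LinearMap.ext fun w => funext fun l => ?_
  have hcomb : ∑ a, M a w l • f a = 0 := by
    refine LinearMap.ext fun v => funext fun i => ?_
    have := congrFun (LinearMap.congr_fun h fun q => v q.1 * w q.2) (i, l)
    simp only [LinearMap.sum_apply, Finset.sum_apply, tmap_apply_tmul, LinearMap.zero_apply,
      Pi.zero_apply] at this
    simpa [Finset.sum_apply, mul_comm] using this
  exact Fintype.linearIndependent_iff.1 hf _ hcomb a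

theorem linearIndependent_tmap {ι₁ ι₂ : Type*} [Fintype ι₁] [Fintype ι₂]
    {f : ι₁ → (Fin n → ℝ) →ₗ[ℝ] (Fin n → ℝ)} {g : ι₂ → (Fin d → ℝ) →ₗ[ℝ] (Fin d → ℝ)}
    (hf : LinearIndependent ℝ f) (hg : LinearIndependent ℝ g) :
    LinearIndependent ℝ fun p : ι₁ × ι₂ => Tmap (f p.1) (g p.2) := by
  refine Fintype.linearIndependent_iff.2 fun c hc p => ?_
  have hrows : ∑ a, Tmap (f a) (∑ b, c (a, b) • g b) = 0 := by
    rw [← hc, Fintype.sum_prod_type]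
    simp only [← tmapBilin_apply, map_sum, map_smul]
  exact Fintype.linearIndependent_iff.1 hg _ (eq_zero_of_sum_tmap_eq_zero hf hrows p.1) p.2

theorem eq_sum_tmap_of_colBlock_eq_sum {ι : Type*} [Fintype ι]
    {T : (Fin n × Fin d → ℝ) →ₗ[ℝ] (Fin n × Fin d → ℝ)} {f : ι → (Fin n → ℝ) →ₗ[ℝ] (Fin n → ℝ)}
    {c : ι → Fin d → Fin d → ℝ} (hc : ∀ j l, colBlock T j l = ∑ a, c a j l • f a) :
    T = ∑ a, Tmap (f a) (Matrix.toLin' (Matrix.of fun l j => c a j l)) := by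
  refine LinearMap.ext fun X => funext fun ⟨i, l⟩ => ?_
  have hrow : ∀ a, (fun k => Matrix.toLin' (Matrix.of fun l j => c a j l) (fun m => X (k, m)) l)
      = ∑ j, c a j l • fun k => X (k, j) := fun a => by
    funext k
    simp [Matrix.toLin'_apply, Matrix.mulVec, dotProduct, Finset.sum_apply]
  rw [apply_eq_sum_colBlock, LinearMap.sum_apply, Finset.sum_apply]
  simp only [tmap_apply, hrow, hc, map_sum, map_smul, LinearMap.sum_apply, LinearMap.smul_apply,
    Finset.sum_apply, Pi.smul_apply, smul_eq_mul]
  exact Finset.sum_comm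

theorem tmap_mem_span_of_mem {ι₁ ι₂ : Type*} [Fintype ι₂]
    (f : ι₁ → (Fin n → ℝ) →ₗ[ℝ] (Fin n → ℝ)) (B₂ : Module.Basis ι₂ ℝ (equivSubmodule H₂))
    (a : ι₁) {L₂ : (Fin d → ℝ) →ₗ[ℝ] (Fin d → ℝ)} (h : L₂ ∈ equivSubmodule H₂) :
    Tmap (f a) L₂ ∈
      Submodule.span ℝ (Set.range fun p : ι₁ × ι₂ => Tmap (f p.1) (B₂ p.2).val) := by
  rw [B₂.eq_sum_repr_mk h, ← tmapBilin_apply, map_sum]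
  refine Submodule.sum_mem _ fun b _ => ?_
  rw [map_smul]
  exact Submodule.smul_mem _ _ (Submodule.subset_span ⟨(a, b), rfl⟩)

theorem mem_span_tmap_of_mem {ι₁ ι₂ : Type*} [Fintype ι₁] [Fintype ι₂]
    (B₁ : Module.Basis ι₁ ℝ (equivSubmodule H₁)) (B₂ : Module.Basis ι₂ ℝ (equivSubmodule H₂))
    {T : (Fin n × Fin d → ℝ) →ₗ[ℝ] (Fin n × Fin d → ℝ)}
    (hT : T ∈ equivSubmodule (Subgroup.map (permProdHom (Fin n) (Fin d)) (H₁.prod H₂))) :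
    T ∈ Submodule.span ℝ (Set.range fun p : ι₁ × ι₂ => Tmap (B₁ p.1).val (B₂ p.2).val) := by
  let c : ι₁ → Fin d → Fin d → ℝ := fun a j l =>
    B₁.repr ⟨colBlock T j l, colBlock_mem_equivSubmodule hT j l⟩ a
  have hc : ∀ b ∈ H₂, ∀ a j l, c a (b j) (b l) = c a j l := fun b hb a j l =>
    congrArg (fun L => B₁.repr L a) (Subtype.ext (colBlock_perm_perm hT hb j l))
  have hT_eq : T = ∑ a, Tmap (B₁ a).val (Matrix.toLin' (Matrix.of fun l j => c a j l)) :=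
    eq_sum_tmap_of_colBlock_eq_sum fun j l =>
      B₁.eq_sum_repr_mk (colBlock_mem_equivSubmodule hT j l)
  rw [hT_eq]
  refine Submodule.sum_mem _ fun a _ => ?_
  exact tmap_mem_span_of_mem (fun a => (B₁ a).val) B₂ a
    (Matrix.toLin'_mem_equivSubmodule fun b hb l j => hc b hb a j l)

end Kronecker

/-- **Kronecker products of bases of commutants form a basis of the commutant of the product.**
If `{L¹ᵢ}` is a basis of the `H₁`-equivariant endomorphisms of `ℝⁿ` and `{L²ⱼ}` a basis of the
`H₂`-equivariant endomorphisms of `ℝ^d`, then the maps `T_{i,j}(X) = L¹ᵢ X (L²ⱼ)ᵀ` form a basis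
(linearly independent and spanning) of the space of `H₁ × H₂`-equivariant linear maps
`ℝ^{n×d} → ℝ^{n×d}`. -/
theorem tmap_basis_of_product_commutant {n d : ℕ}
    (H₁ : Subgroup (Equiv.Perm (Fin n))) (H₂ : Subgroup (Equiv.Perm (Fin d)))
    {ι₁ ι₂ : Type*} (B₁ : Module.Basis ι₁ ℝ (equivSubmodule H₁)) (B₂ : Module.Basis ι₂ ℝ (equivSubmodule H₂)) :
    LinearIndependent ℝ (fun p : ι₁ × ι₂ => Tmap (B₁ p.1).val (B₂ p.2).val) ∧
      Submodule.span ℝ (Set.range fun p : ι₁ × ι₂ => Tmap (B₁ p.1).val (B₂ p.2).val) =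
        equivSubmodule (Subgroup.map (permProdHom (Fin n) (Fin d)) (H₁.prod H₂)) := by
  have := Module.Finite.finite_basis B₁
  have := Module.Finite.finite_basis B₂
  cases nonempty_fintype ι₁
  cases nonempty_fintype ι₂
  have hB₁ : LinearIndependent ℝ fun i => (B₁ i).val :=
    B₁.linearIndependent.map_injOn (equivSubmodule H₁).subtype Subtype.val_injective.injOn
  have hB₂ : LinearIndependent ℝ fun i => (B₂ i).val :=
    B₂.linearIndependent.map_injOn (equivSubmodule H₂).subtype Subtype.val_injective.injOn
  refine ⟨linearIndependent_tmap (f := fun i => (B₁ i).val) (g := fun i => (B₂ i).val) hB₁ hB₂,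
    le_antisymm ?_ fun T hT => mem_span_tmap_of_mem B₁ B₂ hT⟩
  rw [Submodule.span_le]
  rintro _ ⟨p, rfl⟩
  exact tmap_mem_equivSubmodule (B₁ p.1).2 (B₂ p.2).2
end

section
/- Let H ≤ S_d and let G = S_n × H act on ℝ^{n×d} by ((q,h)·X)_{ij} = X_{q⁻¹(i), h⁻¹(j)}. Then every linear G-equivariant map L : ℝ^{n×d} → ℝ^{n×d} has the form L(X)_i = L₁(x_i) + L₂(Σ_{j≠i} x_j), where x_i ∈ ℝ^d is the i-th row of X and L₁, L₂ : ℝ^d → ℝ^d are linear H-equivariant maps. Conversely, every map of this form is linear and G-equivariant. -/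
/-!
Write `L` as an `n × n` array of blocks `L_{ij} : ℝ^d → ℝ^d`, so that `L(X)_i = ∑_j L_{ij}(x_j)`.
Equivariance under row permutations says `L_{q i, q j} = L_{ij}`; since `S_n` acts
2-transitively, all diagonal blocks coincide (this is `L₁`) and all off-diagonal blocks coincide
(this is `L₂`). Equivariance under `H` says that every block commutes with `H`. Conversely, a
row permutation only reindexes the sum over `j ≠ i`.
-/

open Finset

/-- A linear map `M : ℝ^d → ℝ^d` is `H`-equivariant for `H ≤ S_d` acting by permuting
coordinates. -/
def IsHEquivariant {d : ℕ} (H : Subgroup (Equiv.Perm (Fin d)))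
    (M : (Fin d → ℝ) →ₗ[ℝ] (Fin d → ℝ)) : Prop :=
  ∀ h ∈ H, ∀ x : Fin d → ℝ, (M fun j => x (h⁻¹ j)) = fun j => M x (h⁻¹ j)

theorem Equiv.Perm.exists_eq_ite_of_forall_apply_apply_eq {ι S : Type*} [DecidableEq ι]
    [Nonempty S] (M : ι → ι → S) (hM : ∀ (q : Perm ι) i j, M (q i) (q j) = M i j) :
    ∃ a b, ∀ i j, M i j = if i = j then a else b := by
  obtain ⟨a, ha⟩ : ∃ a, ∀ i, M i i = a := by
    rcases isEmpty_or_nonempty ι with _ | ⟨⟨i₀⟩⟩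
    · exact ⟨Classical.arbitrary S, isEmptyElim⟩
    · exact ⟨M i₀ i₀, fun i => by simpa using hM (swap i₀ i) i₀ i₀⟩
  obtain ⟨b, hb⟩ : ∃ b, ∀ i j, i ≠ j → M i j = b := by
    by_cases hpair : ∃ i₀ j₀ : ι, i₀ ≠ j₀
    · obtain ⟨i₀, j₀, h₀⟩ := hpair
      refine ⟨M i₀ j₀, fun i j hij => ?_⟩
      -- `swap i₀ i` moves `(i₀, j₀)` to `(i, k)`; then `swap k j` fixes `i` and moves `k` to `j`.
      set k := swap i₀ i j₀
      have hik : i ≠ k := by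
        simpa [k, swap_apply_left] using (swap i₀ i).injective.ne h₀
      have hmove : M i k = M i₀ j₀ := by simpa [k] using hM (swap i₀ i) i₀ j₀
      rw [← hmove, ← hM (swap k j) i k, swap_apply_of_ne_of_ne hik hij, swap_apply_left]
    · exact ⟨Classical.arbitrary S, fun i j hij => (hpair ⟨i, j, hij⟩).elim⟩
  exact ⟨a, b, fun i j => by split_ifs with hij <;> [exact hij ▸ ha i; exact hb i j hij]⟩

theorem Finset.sum_erase_comp_perm {ι M : Type*} [Fintype ι] [DecidableEq ι] [AddCommMonoid M]
    (X : ι → M) (q : Equiv.Perm ι) (i : ι) :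
    ∑ j ∈ univ.erase i, X (q⁻¹ j) = ∑ k ∈ univ.erase (q⁻¹ i), X k :=
  sum_equiv q⁻¹ (by simp) (fun _ _ => rfl)

namespace LinearMap

variable {R ι V W : Type*} [Semiring R] [DecidableEq ι]
  [AddCommMonoid V] [Module R V] [AddCommMonoid W] [Module R W]

def block (L : (ι → V) →ₗ[R] (ι → W)) (i j : ι) : V →ₗ[R] W :=
  proj i ∘ₗ L ∘ₗ single R (fun _ => V) j

theorem block_apply (L : (ι → V) →ₗ[R] (ι → W)) (i j : ι) (x : V) :
    L.block i j x = L (Pi.single j x) i :=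
  rfl

theorem block_perm_eq {L : (ι → V) →ₗ[R] (ι → W)} {q : Equiv.Perm ι}
    (hq : ∀ X, L (fun i => X (q⁻¹ i)) = fun i => L X (q⁻¹ i)) (i j : ι) :
    L.block (q i) (q j) = L.block i j := by
  ext x
  have hsingle : (fun k => (Pi.single j x : ι → V) (q⁻¹ k)) = Pi.single (q j) x :=
    Pi.single_comp_equiv q⁻¹ j x
  rw [block_apply, block_apply, ← hsingle, hq]
  simp

theorem block_comp_eq {L : (ι → V) →ₗ[R] (ι → W)} {f : V →ₗ[R] V} {g : W →ₗ[R] W}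
    (hfg : ∀ X, L (fun i => f (X i)) = fun i => g (L X i)) (i j : ι) :
    L.block i j ∘ₗ f = g ∘ₗ L.block i j := by
  ext x
  have hsingle : Pi.single j (f x) = fun k => f ((Pi.single j x : ι → V) k) :=
    funext fun k => (Pi.apply_single (fun _ => f) (fun _ => f.map_zero) j x k).symm
  simp [block_apply, hsingle, hfg]

variable [Fintype ι]

theorem apply_eq_sum_block (L : (ι → V) →ₗ[R] (ι → W)) (X : ι → V) (i : ι) :
    L X i = ∑ j, L.block i j (X j) := by
  conv_lhs => rw [← univ_sum_single X]
  simp [block_apply]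

theorem apply_eq_of_block_eq_ite (L : (ι → V) →ₗ[R] (ι → W)) (a b : V →ₗ[R] W)
    (hblock : ∀ i j, L.block i j = if i = j then a else b) (X : ι → V) (i : ι) :
    L X i = a (X i) + b (∑ j ∈ univ.erase i, X j) := by
  rw [apply_eq_sum_block, ← add_sum_erase _ _ (mem_univ i), map_sum, hblock, if_pos rfl]
  congr 1
  exact sum_congr rfl fun j hj => by rw [hblock, if_neg (ne_of_mem_erase hj).symm]

theorem map_perm_comp_of_apply_eq {L : (ι → V) →ₗ[R] (ι → V)} {a b f : V →ₗ[R] V}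
    (hL : ∀ X i, L X i = a (X i) + b (∑ j ∈ univ.erase i, X j))
    (ha : a ∘ₗ f = f ∘ₗ a) (hb : b ∘ₗ f = f ∘ₗ b) (q : Equiv.Perm ι) (X : ι → V) :
    L (fun i => f (X (q⁻¹ i))) = fun i => f (L X (q⁻¹ i)) := by
  funext i
  rw [hL, hL, ← map_sum, sum_erase_comp_perm (fun k => X k), map_add]
  exact congrArg₂ (· + ·) (LinearMap.congr_fun ha _) (LinearMap.congr_fun hb _)

end LinearMap

theorem isHEquivariant_iff_comp_funLeft {d : ℕ} {H : Subgroup (Equiv.Perm (Fin d))}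
    {M : (Fin d → ℝ) →ₗ[ℝ] (Fin d → ℝ)} :
    IsHEquivariant H M ↔
      ∀ h ∈ H, M ∘ₗ LinearMap.funLeft ℝ ℝ ⇑h⁻¹ = LinearMap.funLeft ℝ ℝ ⇑h⁻¹ ∘ₗ M := by
  simp only [LinearMap.ext_iff]
  rfl

/-- **Characterization of DSS layers (Theorem 1).** For `G = S_n × H` acting on `ℝ^{n×d}` by
`((q,h)·X)_{ij} = X_{q⁻¹(i),h⁻¹(j)}`, a linear map `L : ℝ^{n×d} → ℝ^{n×d}` is `G`-equivariant
if and only if it has the form `L(X)_i = L₁(xᵢ) + L₂(∑_{j≠i} xⱼ)` for linear `H`-equivariant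
maps `L₁, L₂ : ℝ^d → ℝ^d`. -/
theorem dss_layer_characterization {n d : ℕ} (H : Subgroup (Equiv.Perm (Fin d)))
    (L : (Fin n → Fin d → ℝ) →ₗ[ℝ] (Fin n → Fin d → ℝ)) :
    (∀ (q : Equiv.Perm (Fin n)), ∀ h ∈ H, ∀ X : Fin n → Fin d → ℝ,
        (L fun i => fun j => X (q⁻¹ i) (h⁻¹ j)) = fun i => fun j => L X (q⁻¹ i) (h⁻¹ j)) ↔
      ∃ L₁ L₂ : (Fin d → ℝ) →ₗ[ℝ] (Fin d → ℝ),
        IsHEquivariant H L₁ ∧ IsHEquivariant H L₂ ∧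
          ∀ (X : Fin n → Fin d → ℝ) (i : Fin n),
            L X i = L₁ (X i) + L₂ (∑ j ∈ Finset.univ.erase i, X j) := by
  constructor
  · intro hL
    have hrows (q : Equiv.Perm (Fin n)) (X : Fin n → Fin d → ℝ) :
        L (fun i => X (q⁻¹ i)) = fun i => L X (q⁻¹ i) := by
      simpa using hL q 1 H.one_mem X
    have hcols (h) (hh : h ∈ H) (X : Fin n → Fin d → ℝ) :
        L (fun i j => X i (h⁻¹ j)) = fun i j => L X i (h⁻¹ j) := by
      simpa using hL 1 h hh X
    have hblock_equivariant (i j : Fin n) : IsHEquivariant H (L.block i j) :=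
      isHEquivariant_iff_comp_funLeft.2 fun h hh => LinearMap.block_comp_eq (hcols h hh) i j
    have : Nonempty {M // IsHEquivariant H M} :=
      ⟨⟨0, isHEquivariant_iff_comp_funLeft.2 fun _ _ => by simp⟩⟩
    -- Taking the blocks in this subtype makes the two constant blocks `H`-equivariant, even when
    -- `n ≤ 1` and one of them does not occur.
    obtain ⟨⟨a, ha⟩, ⟨b, hb⟩, hab⟩ := Equiv.Perm.exists_eq_ite_of_forall_apply_apply_eq
      (fun i j => (⟨L.block i j, hblock_equivariant i j⟩ : {M // IsHEquivariant H M}))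
      (fun q i j => Subtype.ext (LinearMap.block_perm_eq (hrows q) i j))
    refine ⟨a, b, ha, hb, L.apply_eq_of_block_eq_ite a b fun i j => ?_⟩
    simpa [apply_ite Subtype.val] using congrArg Subtype.val (hab i j)
  · rintro ⟨L₁, L₂, h₁, h₂, hform⟩ q h hh X
    exact LinearMap.map_perm_comp_of_apply_eq hform (isHEquivariant_iff_comp_funLeft.1 h₁ h hh)
      (isHEquivariant_iff_comp_funLeft.1 h₂ h hh) q X
end

section
/- Let H ≤ S_d and G = S_n × H act on ℝ^{n×d} as rows-permutation combined with a common column permutation from H. The dimension of the space of linear G-equivariant maps ℝ^{n×d} → ℝ^{n×d} equals 2·E(H), where E(H) is the dimension of the space of linear H-equivariant maps ℝ^d → ℝ^d (assuming n ≥ 2). -/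
/-- The submodule of linear endomorphisms of `ℝ^{n×d}` equivariant to `G = S_n × H`
acting by `((q,h)·X)_{ij} = X_{q⁻¹(i),h⁻¹(j)}`. -/
noncomputable def dssSubmodule {n d : ℕ} (H : Subgroup (Equiv.Perm (Fin d))) :
    Submodule ℝ ((Fin n → Fin d → ℝ) →ₗ[ℝ] (Fin n → Fin d → ℝ)) where
  carrier := {L | ∀ (q : Equiv.Perm (Fin n)), ∀ h ∈ H, ∀ X : Fin n → Fin d → ℝ,
    (L fun i => fun j => X (q⁻¹ i) (h⁻¹ j)) = fun i => fun j => L X (q⁻¹ i) (h⁻¹ j)}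
  add_mem' := by
    intro L M hL hM q h hh X
    simp only [LinearMap.add_apply, hL q h hh X, hM q h hh X]
    rfl
  zero_mem' := by intro q h hh X; simp; rfl
  smul_mem' := by
    intro c L hL q h hh X
    simp only [LinearMap.smul_apply, hL q h hh X]
    rfl

/-!
Viewed as an `n × n` matrix of blocks `ℝ^d → ℝ^d`, a map commuting with all row permutations has
a single block `A` on the diagonal and a single block `B` off it, since `S_n` is 2-transitive on
the rows; thus `(L X)ᵢ = A Xᵢ + B (∑_{k ≠ i} X_k)`. Such a map commutes with the common column
permutations from `H` exactly when `A` and `B` are `H`-equivariant, so `L ↦ (A, B)` is a linear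
isomorphism onto two copies of the space of `H`-equivariant maps.
-/
namespace LinearMap

variable {R ι V : Type*} [CommSemiring R] [AddCommGroup V] [Module R V]

def ofBlocks [Fintype ι] (A B : V →ₗ[R] V) : (ι → V) →ₗ[R] (ι → V) :=
  pi fun i => A ∘ₗ proj i + B ∘ₗ (∑ k, proj k - proj i)

@[simp]
theorem ofBlocks_apply [Fintype ι] (A B : V →ₗ[R] V) (X : ι → V) (i : ι) :
    ofBlocks A B X i = A (X i) + B (∑ k, X k - X i) := by
  simp [ofBlocks]

variable [DecidableEq ι]

def blockEntry (i k : ι) : ((ι → V) →ₗ[R] (ι → V)) →ₗ[R] (V →ₗ[R] V) where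
  toFun L := proj i ∘ₗ L ∘ₗ single R (fun _ => V) k
  map_add' _ _ := rfl
  map_smul' _ _ := rfl

@[simp]
theorem blockEntry_apply (L : (ι → V) →ₗ[R] (ι → V)) (i k : ι) (x : V) :
    blockEntry i k L x = L (Pi.single k x) i := rfl

theorem blockEntry_ofBlocks_self [Fintype ι] (A B : V →ₗ[R] V) (z : ι) :
    blockEntry z z (ofBlocks A B) = A := by
  ext x
  simp

theorem blockEntry_ofBlocks_of_ne [Fintype ι] (A B : V →ₗ[R] V) {o z : ι} (h : o ≠ z) :
    blockEntry o z (ofBlocks A B) = B := by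
  ext x
  simp [h]

section RowEquivariant

variable {L : (ι → V) →ₗ[R] (ι → V)}

theorem apply_single_perm
    (hL : ∀ (q : Equiv.Perm ι) (X : ι → V), L (fun i => X (q⁻¹ i)) = fun i => L X (q⁻¹ i))
    (q : Equiv.Perm ι) (k i : ι) (x : V) :
    L (Pi.single (q k) x) (q i) = L (Pi.single k x) i := by
  have hsingle : (fun j => (Pi.single k x : ι → V) (q⁻¹ j)) = Pi.single (q k) x := by
    ext j
    simp [Pi.single_apply, Equiv.symm_apply_eq]
  have h := congrFun (hL q (Pi.single k x)) (q i)
  rwa [hsingle, Equiv.Perm.inv_def, Equiv.symm_apply_apply] at h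

theorem apply_single_self_eq
    (hL : ∀ (q : Equiv.Perm ι) (X : ι → V), L (fun i => X (q⁻¹ i)) = fun i => L X (q⁻¹ i))
    (k k' : ι) (x : V) :
    L (Pi.single k x) k = L (Pi.single k' x) k' := by
  simpa using (apply_single_perm hL (Equiv.swap k k') k k x).symm

theorem apply_single_eq_of_ne
    (hL : ∀ (q : Equiv.Perm ι) (X : ι → V), L (fun i => X (q⁻¹ i)) = fun i => L X (q⁻¹ i))
    {i k i' k' : ι} (h : i ≠ k) (h' : i' ≠ k') (x : V) :
    L (Pi.single k x) i = L (Pi.single k' x) i' := by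
  obtain ⟨q, hk, hi⟩ := MulAction.is_two_pretransitive_iff.mp
    (Equiv.Perm.isMultiplyPretransitive ι 2) h.symm h'.symm
  rw [Equiv.Perm.smul_def] at hk hi
  rw [← hk, ← hi, apply_single_perm hL]

theorem eq_ofBlocks [Fintype ι]
    (hL : ∀ (q : Equiv.Perm ι) (X : ι → V), L (fun i => X (q⁻¹ i)) = fun i => L X (q⁻¹ i))
    {o z : ι} (hoz : o ≠ z) :
    L = ofBlocks (blockEntry z z L) (blockEntry o z L) := by
  refine LinearMap.ext fun X => funext fun i => ?_
  calc L X i = ∑ k, L (Pi.single k (X k)) i := by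
        conv_lhs => rw [← Finset.univ_sum_single X]
        simp only [map_sum, Finset.sum_apply]
    _ = L (Pi.single i (X i)) i + ∑ k ∈ Finset.univ.erase i, L (Pi.single k (X k)) i :=
        (Finset.add_sum_erase _ _ (Finset.mem_univ i)).symm
    _ = blockEntry z z L (X i) + ∑ k ∈ Finset.univ.erase i, blockEntry o z L (X k) := by
        rw [blockEntry_apply, apply_single_self_eq hL i z]
        refine congrArg _ (Finset.sum_congr rfl fun k hk => ?_)
        exact apply_single_eq_of_ne hL (Finset.ne_of_mem_erase hk).symm hoz _
    _ = ofBlocks (blockEntry z z L) (blockEntry o z L) X i := by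
        rw [ofBlocks_apply, ← map_sum, Finset.sum_erase_eq_sub (Finset.mem_univ i)]

end RowEquivariant

end LinearMap

section DSS

open LinearMap

variable {n d : ℕ} {H : Subgroup (Equiv.Perm (Fin d))}
  {L : (Fin n → Fin d → ℝ) →ₗ[ℝ] (Fin n → Fin d → ℝ)}

theorem apply_perm_rows_of_mem_dssSubmodule (hL : L ∈ dssSubmodule H)
    (q : Equiv.Perm (Fin n)) (X : Fin n → Fin d → ℝ) :
    L (fun i => X (q⁻¹ i)) = fun i => L X (q⁻¹ i) := by
  simpa using hL q 1 (one_mem H) X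

theorem blockEntry_mem_equivSubmodule (hL : L ∈ dssSubmodule H) (i k : Fin n) :
    blockEntry i k L ∈ equivSubmodule H := by
  intro g hg x
  have hsingle :
      (fun i' j => (Pi.single k x : Fin n → Fin d → ℝ) ((1 : Equiv.Perm (Fin n))⁻¹ i') (g⁻¹ j))
        = Pi.single k (fun j => x (g⁻¹ j)) := by
    ext i' j
    by_cases h : i' = k <;> simp [h]
  have h := hL 1 g hg (Pi.single k x)
  rw [hsingle] at h
  exact congrFun h i

theorem ofBlocks_mem_dssSubmodule {A B : (Fin d → ℝ) →ₗ[ℝ] (Fin d → ℝ)}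
    (hA : A ∈ equivSubmodule H) (hB : B ∈ equivSubmodule H) :
    ofBlocks A B ∈ dssSubmodule (n := n) H := by
  intro q h hh X
  funext i
  have hsum : ∑ k, (fun j => X (q⁻¹ k) (h⁻¹ j)) - (fun j => X (q⁻¹ i) (h⁻¹ j))
      = fun j => (∑ k, X k - X (q⁻¹ i)) (h⁻¹ j) := by
    ext j
    simp only [Pi.sub_apply, Finset.sum_apply]
    rw [Equiv.sum_comp q⁻¹ (fun k => X k (h⁻¹ j))]
  rw [ofBlocks_apply, ofBlocks_apply, hsum, hA h hh, hB h hh]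
  rfl

noncomputable def dssSubmoduleEquivProd {z o : Fin n} (hoz : o ≠ z) :
    dssSubmodule (n := n) H ≃ₗ[ℝ] equivSubmodule H × equivSubmodule H :=
  LinearEquiv.ofBijective
    ((((blockEntry z z).domRestrict _).codRestrict _
        fun L => blockEntry_mem_equivSubmodule L.2 z z).prod
      (((blockEntry o z).domRestrict _).codRestrict _
        fun L => blockEntry_mem_equivSubmodule L.2 o z))
    ⟨fun L M hLM => by
      obtain ⟨hz, ho⟩ := Prod.ext_iff.mp hLM
      apply Subtype.ext
      rw [eq_ofBlocks (apply_perm_rows_of_mem_dssSubmodule L.2) hoz,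
        eq_ofBlocks (apply_perm_rows_of_mem_dssSubmodule M.2) hoz]
      exact congrArg₂ ofBlocks (congrArg Subtype.val hz) (congrArg Subtype.val ho),
    fun ⟨A, B⟩ => ⟨⟨ofBlocks A B, ofBlocks_mem_dssSubmodule A.2 B.2⟩,
      Prod.ext (Subtype.ext (blockEntry_ofBlocks_self A.1 B.1 z))
        (Subtype.ext (blockEntry_ofBlocks_of_ne A.1 B.1 hoz))⟩⟩

end DSS

/-- **Dimension of the space of DSS layers:** for `n ≥ 2`, the space of linear
`S_n × H`-equivariant maps `ℝ^{n×d} → ℝ^{n×d}` has dimension `2·E(H)`. -/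
theorem finrank_dssSubmodule {n d : ℕ} (hn : 2 ≤ n) (H : Subgroup (Equiv.Perm (Fin d))) :
    Module.finrank ℝ (dssSubmodule (n := n) H) =
      2 * Module.finrank ℝ (equivSubmodule H) := by
  have : Nontrivial (Fin n) := Fin.nontrivial_iff_two_le.mpr hn
  obtain ⟨o, z, hoz⟩ := exists_pair_ne (Fin n)
  have := Module.Free.of_divisionRing ℝ (equivSubmodule H)
  rw [(dssSubmoduleEquivProd (H := H) hoz).finrank_eq, Module.finrank_prod, two_mul]
end

section
/- Let H ≤ S_d and G = S_n × H act on ℝ^{n×d}. Every linear G-equivariant map L : ℝ^{n×d} → ℝ^d (where H acts on the output ℝ^d by permutation and S_n acts trivially on it) has the form L(X) = L^H(Σ_{j=1}^n x_j), where L^H : ℝ^d → ℝ^d is a linear H-equivariant map and x_j denotes the j-th row of X. -/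
/-- Every linear `S_n × H`-equivariant map `L : ℝ^{n×d} → ℝ^d` (with `S_n` acting trivially on
the output and `H` by permutation) has the form `L(X) = L^H(∑ⱼ xⱼ)` for some linear
`H`-equivariant `L^H : ℝ^d → ℝ^d`. -/
theorem equivariant_to_Rd_characterization {n d : ℕ} (H : Subgroup (Equiv.Perm (Fin d)))
    (L : (Fin n → Fin d → ℝ) →ₗ[ℝ] (Fin d → ℝ))
    (hL : ∀ (q : Equiv.Perm (Fin n)), ∀ h ∈ H, ∀ X : Fin n → Fin d → ℝ,
      (L fun i => fun j => X (q⁻¹ i) (h⁻¹ j)) = fun j => L X (h⁻¹ j)) :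
    ∃ LH : (Fin d → ℝ) →ₗ[ℝ] (Fin d → ℝ), IsHEquivariant H LH ∧
      ∀ X : Fin n → Fin d → ℝ, L X = LH (∑ j, X j) := by
  rcases n with _ | m
  · refine ⟨0, ?_, ?_⟩
    · intro h hh x
      funext j
      simp
    · intro X
      have hX : X = 0 := Subsingleton.elim _ _
      rw [hX, map_zero, LinearMap.zero_apply]
  · set e : (Fin d → ℝ) →ₗ[ℝ] (Fin (m + 1) → Fin d → ℝ) :=
      LinearMap.single ℝ (fun _ : Fin (m + 1) => Fin d → ℝ) 0 with he
    refine ⟨L ∘ₗ e, ?_, ?_⟩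
    · intro h hh x
      have key := hL 1 h hh (Pi.single (0 : Fin (m + 1)) x)
      have harg : (fun i => fun j => (Pi.single (0 : Fin (m + 1)) x : Fin (m + 1) → Fin d → ℝ) ((1 : Equiv.Perm (Fin (m+1)))⁻¹ i) (h⁻¹ j))
          = (Pi.single (0 : Fin (m + 1)) (fun j => x (h⁻¹ j)) : Fin (m + 1) → Fin d → ℝ) := by
        funext i j
        by_cases hi : i = 0
        · subst hi; simp
        · simp [Pi.single_eq_of_ne hi]
      rw [harg] at key
      exact key
    · intro X
      -- every row can be moved to row 0
      have hrow : ∀ i : Fin (m + 1), ∀ x : Fin d → ℝ,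
          L (Pi.single i x) = L (Pi.single 0 x) := by
        intro i x
        have key := hL (Equiv.swap 0 i) 1 H.one_mem (Pi.single i x)
        have harg : (fun i' => fun j => (Pi.single i x : Fin (m + 1) → Fin d → ℝ) ((Equiv.swap (0 : Fin (m+1)) i)⁻¹ i') ((1 : Equiv.Perm (Fin d))⁻¹ j))
            = (Pi.single (0 : Fin (m + 1)) x : Fin (m + 1) → Fin d → ℝ) := by
          funext i' j
          simp only [Equiv.swap_inv, inv_one, Equiv.Perm.one_apply]
          by_cases hi' : i' = 0
          · subst hi'; simp
          · have hne : Equiv.swap (0 : Fin (m+1)) i i' ≠ i := by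
              intro hc
              exact hi' ((Equiv.swap 0 i).injective
                (hc.trans (Equiv.swap_apply_left 0 i).symm))
            rw [Pi.single_eq_of_ne hne, Pi.single_eq_of_ne hi']
        rw [harg] at key
        exact key.symm
      calc L X = L (∑ i, Pi.single i (X i)) := by rw [Finset.univ_sum_single]
        _ = ∑ i, L (Pi.single i (X i)) := map_sum L _ _
        _ = ∑ i, (L ∘ₗ e) (X i) := Finset.sum_congr rfl fun i _ => hrow i (X i)
        _ = (L ∘ₗ e) (∑ i, X i) := (map_sum _ _ _).symm
end

section
/- Let H ≤ S_d and G = S_n × H act on ℝ^{n×d}. Every linear G-invariant map L : ℝ^{n×d} → ℝ has the form L(X) = ℓ(Σ_{j=1}^n x_j), where ℓ : ℝ^d → ℝ is a linear H-invariant functional (i.e., ℓ(h·x) = ℓ(x) for all h ∈ H). -/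
/-- Every linear `S_n × H`-invariant functional `L : ℝ^{n×d} → ℝ` has the form
`L(X) = ℓ(∑ⱼ xⱼ)` for a linear `H`-invariant functional `ℓ : ℝ^d → ℝ`. -/
theorem invariant_functional_characterization {n d : ℕ} (H : Subgroup (Equiv.Perm (Fin d)))
    (L : (Fin n → Fin d → ℝ) →ₗ[ℝ] ℝ)
    (hL : ∀ (q : Equiv.Perm (Fin n)), ∀ h ∈ H, ∀ X : Fin n → Fin d → ℝ,
      (L fun i => fun j => X (q⁻¹ i) (h⁻¹ j)) = L X) :
    ∃ l : (Fin d → ℝ) →ₗ[ℝ] ℝ,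
      (∀ h ∈ H, ∀ x : Fin d → ℝ, (l fun j => x (h⁻¹ j)) = l x) ∧
        ∀ X : Fin n → Fin d → ℝ, L X = l (∑ j, X j) := by
  cases n with
  | zero =>
      refine ⟨0, by simp, fun X => ?_⟩
      have hX : X = 0 := Subsingleton.elim _ _
      rw [hX, map_zero, LinearMap.zero_apply]
  | succ m =>
      set f : (Fin d → ℝ) →ₗ[ℝ] ℝ :=
        L.comp (LinearMap.single ℝ (fun _ : Fin (m+1) => (Fin d → ℝ)) 0) with hf
      have hfapp : ∀ x : Fin d → ℝ, f x = L (Pi.single 0 x) := fun x => rfl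
      -- all rows contribute equally
      have hrow : ∀ (i : Fin (m+1)) (x : Fin d → ℝ),
          L (Pi.single i x) = L (Pi.single (0 : Fin (m+1)) x) := by
        intro i x
        have := hL (Equiv.swap 0 i) 1 (one_mem H) (Pi.single 0 x)
        rw [← this]
        congr 1
        funext i' j
        simp only [inv_one, Equiv.Perm.one_apply, Equiv.symm_swap]
        rcases eq_or_ne i' i with rfl | hne
        · simp [Pi.single_apply]
        · have h1 : Equiv.swap (0 : Fin (m+1)) i i' ≠ 0 := by
            intro h
            apply hne
            have := (Equiv.swap (0 : Fin (m+1)) i).injective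
              (h.trans (Equiv.swap_apply_right 0 i).symm)
            exact this
          simp [Pi.single_apply, h1, hne]
      refine ⟨f, ?_, ?_⟩
      · intro h hh x
        rw [hfapp, hfapp]
        have := hL 1 h hh (Pi.single 0 x)
        rw [← this]
        congr 1
        funext i j
        by_cases hi : i = 0 <;> simp [Pi.single_apply, hi]
      · intro X
        have hdec : X = ∑ i, Pi.single i (X i) := (Finset.univ_sum_single X).symm
        calc L X = ∑ i, L (Pi.single i (X i)) := by rw [hdec, map_sum]; rw [← hdec]
          _ = ∑ i, L (Pi.single (0 : Fin (m+1)) (X i)) := by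
                exact Finset.sum_congr rfl fun i _ => hrow i (X i)
          _ = L (Pi.single (0 : Fin (m+1)) (∑ i, X i)) := by
                rw [← map_sum]
                congr 1
                funext k j
                by_cases hk : k = 0 <;>
                  simp [Finset.sum_apply, Pi.single_apply, hk]
          _ = f (∑ i, X i) := (hfapp _).symm
end

section
/- Let H ≤ S_d be a finite permutation group acting on ℝ^d by permuting coordinates. There exist l ∈ ℕ and a map u : ℝ^d → ℝ^l whose components are H-invariant polynomials, such that for all x, y ∈ ℝ^d: u(x) = u(y) if and only if there exists h ∈ H with x = h·y. -/
open MvPolynomial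

namespace SepOrbAux

open scoped Classical

variable {d : ℕ}

/-- The linear form `∑ vᵢ Xᵢ` associated to a vector `v`. -/
noncomputable def L (v : Fin d → ℝ) : MvPolynomial (Fin d) ℝ :=
  ∑ i, MvPolynomial.C (v i) * MvPolynomial.X i

/-- The symbolic linear form whose coefficients are the variables permuted by `h`. -/
noncomputable def LP (h : Equiv.Perm (Fin d)) :
    MvPolynomial (Fin d) (MvPolynomial (Fin d) ℝ) :=
  ∑ i, MvPolynomial.C (MvPolynomial.X (h⁻¹ i)) * MvPolynomial.X i

variable (H : Subgroup (Equiv.Perm (Fin d)))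

/-- The symbolic resolvent polynomial. -/
noncomputable def Q : Polynomial (MvPolynomial (Fin d) (MvPolynomial (Fin d) ℝ)) :=
  ∏ h : H, (Polynomial.X - Polynomial.C (LP (h : Equiv.Perm (Fin d))))

/-- The resolvent specialized at a point `x`. -/
noncomputable def prodP (x : Fin d → ℝ) : Polynomial (MvPolynomial (Fin d) ℝ) :=
  ∏ h : H, (Polynomial.X -
    Polynomial.C (L (fun j => x ((h : Equiv.Perm (Fin d))⁻¹ j))))

/-- The coefficient polynomials of the resolvent. -/
noncomputable def pfun (a : ℕ × (Fin d →₀ ℕ)) : MvPolynomial (Fin d) ℝ :=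
  MvPolynomial.coeff a.2 ((Q H).coeff a.1)

/-- A finite set containing all indices where `pfun` can be nonzero. -/
noncomputable def J : Finset (ℕ × (Fin d →₀ ℕ)) :=
  (Q H).support ×ˢ ((Q H).support.biUnion fun k => ((Q H).coeff k).support)

lemma pfun_eq_zero {a : ℕ × (Fin d →₀ ℕ)} (ha : a ∉ J H) : pfun H a = 0 := by
  by_cases h1 : a.1 ∈ (Q H).support
  · have h2 : a.2 ∉ ((Q H).coeff a.1).support := by
      intro h2
      exact ha (Finset.mem_product.2 ⟨h1, Finset.mem_biUnion.2 ⟨a.1, h1, h2⟩⟩)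
    simpa [pfun] using MvPolynomial.notMem_support_iff.1 h2
  · simp [pfun, Polynomial.notMem_support_iff.1 h1]

lemma map_Q (x : Fin d → ℝ) :
    (Q H).map (MvPolynomial.map (MvPolynomial.eval x) :
        MvPolynomial (Fin d) (MvPolynomial (Fin d) ℝ) →+* MvPolynomial (Fin d) ℝ)
      = prodP H x := by
  rw [Q, Polynomial.map_prod]
  refine Finset.prod_congr rfl fun h _ => ?_
  rw [Polynomial.map_sub, Polynomial.map_X, Polynomial.map_C]
  congr 1
  simp [LP, L, map_sum]

/-- The crucial evaluation formula. -/
lemma eval_pfun (x : Fin d → ℝ) (a : ℕ × (Fin d →₀ ℕ)) :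
    MvPolynomial.eval x (pfun H a) =
      MvPolynomial.coeff a.2 ((prodP H x).coeff a.1) := by
  rw [← map_Q H x, Polynomial.coeff_map, MvPolynomial.coeff_map, pfun]

/-- Invariance of the specialized resolvent. -/
lemma prodP_invariant {h : Equiv.Perm (Fin d)} (hh : h ∈ H) (x : Fin d → ℝ) :
    prodP H (fun j => x (h⁻¹ j)) = prodP H x := by
  set h' : H := ⟨h, hh⟩
  have key := Equiv.prod_comp (Equiv.mulRight h')
      (fun g : H => Polynomial.X -
        Polynomial.C (L (fun j => x ((g : Equiv.Perm (Fin d))⁻¹ j))))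
  rw [prodP, prodP, ← key]
  refine Finset.prod_congr rfl fun g _ => ?_
  congr 2

/-- `L` is injective. -/
lemma L_injective : Function.Injective (L (d := d)) := by
  intro v w hvw
  funext i
  have key : ∀ u : Fin d → ℝ,
      MvPolynomial.eval (fun j => if j = i then (1 : ℝ) else 0) (L u) = u i := by
    intro u
    rw [L, map_sum]
    rw [Finset.sum_eq_single i]
    · simp
    · intro b _ hb; simp [hb]
    · simp
  rw [← key v, ← key w, hvw]

/-- The multiset of linear forms of the orbit of `x`. -/
noncomputable def M (x : Fin d → ℝ) : Multiset (MvPolynomial (Fin d) ℝ) :=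
  (Finset.univ.val : Multiset H).map
    fun h : H => L (fun j => x ((h : Equiv.Perm (Fin d))⁻¹ j))

lemma prodP_eq_multiset (x : Fin d → ℝ) :
    prodP H x = ((M H x).map fun a => Polynomial.X - Polynomial.C a).prod := by
  rw [prodP, M, Multiset.map_map]
  rfl

lemma M_eq_of_prodP_eq {x y : Fin d → ℝ} (hp : prodP H x = prodP H y) :
    M H x = M H y := by
  have hx := Polynomial.roots_multiset_prod_X_sub_C (M H x)
  have hy := Polynomial.roots_multiset_prod_X_sub_C (M H y)
  rw [← hx, ← hy, ← prodP_eq_multiset, ← prodP_eq_multiset, hp]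

end SepOrbAux

open SepOrbAux in
/-- **Lemma 2: invariant polynomials separate orbits.** For any permutation group `H ≤ S_d`
acting on `ℝ^d` by permuting coordinates, there is a finite family of `H`-invariant polynomials
`u = (p₁,…,p_l)` such that `u(x) = u(y)` iff `x = h · y` for some `h ∈ H`. -/
theorem invariant_polynomials_separate_orbits {d : ℕ} (H : Subgroup (Equiv.Perm (Fin d))) :
    ∃ (l : ℕ) (p : Fin l → MvPolynomial (Fin d) ℝ),
      (∀ i : Fin l, ∀ h ∈ H, ∀ x : Fin d → ℝ,
          eval (fun j => x (h⁻¹ j)) (p i) = eval x (p i)) ∧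
        ∀ x y : Fin d → ℝ,
          ((∀ i : Fin l, eval x (p i) = eval y (p i)) ↔
            ∃ h ∈ H, x = fun j => y (h⁻¹ j)) := by
  classical
  refine ⟨(J H).card, fun i => pfun H ((J H).equivFin.symm i), ?_, ?_⟩
  · intro i h hh x
    rw [eval_pfun, eval_pfun, prodP_invariant H hh]
  · intro x y
    constructor
    · intro hev
      -- all coefficients of the specialized resolvents agree
      have hall : ∀ a : ℕ × (Fin d →₀ ℕ),
          MvPolynomial.coeff a.2 ((prodP H x).coeff a.1) =
          MvPolynomial.coeff a.2 ((prodP H y).coeff a.1) := by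
        intro a
        by_cases ha : a ∈ J H
        · have := hev ((J H).equivFin ⟨a, ha⟩)
          simp only [Equiv.symm_apply_apply] at this
          rwa [eval_pfun, eval_pfun] at this
        · rw [← eval_pfun H x a, ← eval_pfun H y a, pfun_eq_zero H ha]
          simp
      have hpp : prodP H x = prodP H y := by
        ext k e
        exact hall (k, e)
      have hM := M_eq_of_prodP_eq H hpp
      have hmem : L x ∈ M H x := by
        rw [M]
        refine Multiset.mem_map.2 ⟨(1 : H), by simp, ?_⟩
        congr 1
      rw [hM, M] at hmem
      obtain ⟨h, _, hLh⟩ := Multiset.mem_map.1 hmem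
      refine ⟨(h : Equiv.Perm (Fin d)), h.2, ?_⟩
      exact (L_injective hLh).symm
    · rintro ⟨h, hh, rfl⟩
      intro i
      rw [eval_pfun, eval_pfun, prodP_invariant H hh]
end
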